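/- Fatou theorem for Poisson integrals of integrable densities: let f : ℝ → [0,∞) be Lebesgue-integrable and let h(z) = ∫_ℝ P(z,x) f(x) dx. Then for Lebesgue-almost every x₀ ∈ ℝ and every aperture c > 0, (1/π)·h(z) → f(x₀) as z → x₀ with z in the cone Γ_c(x₀). -/

import Mathlib

open MeasureTheory Filter Topology Real

/-- The Poisson kernel of the upper half-plane. -/
noncomputable def poissonKernelUHP (z : ℂ) (x : ℝ) : ℝ :=
  z.im / ((z.re - x) ^ 2 + z.im ^ 2)

/-- The nontangential cone of aperture `c` at `x₀`. -/
def cone (x₀ c : ℝ) : Set ℂ :=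
  {z : ℂ | 0 < z.im ∧ |z.re - x₀| ≤ c * z.im}

/-!
Fix a Lebesgue point `x₀` of `f` and put `ψ = |f - f x₀|`. Since `∫ P(z, ·) = π`, it suffices to
show `∫ P(z, x) ψ(x) dx → 0`. On the cone `P(z, ·) ≤ (2 + 2c²) P(x₀ + i Im z, ·)`, which reduces
the problem to vertical approach. The vertical kernel `P(x₀ + it, x)` is a decreasing function of
`|x - x₀|`, hence a superposition `∫_{|x - x₀|}^∞ m_t(r) dr` of indicators of balls around `x₀`
with `m_t(r) = 2tr / (r² + t²)²`, and Tonelli turns the integral into `∫ m_t(r) Φ(r) dr`,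
`Φ(r) = ∫_{B(x₀, r)} ψ`. Now `Φ(r) ≤ εr` for small `r` (Lebesgue point), `Φ(r) = O(r)` for large
`r` (integrability), and `r m_t(r) ≤ 2 P_t(r)` has mass `2π`, so the integral is `≤ 2πε + O(t)`.
-/

open scoped ENNReal NNReal
open Set Metric ProbabilityTheory

section Kernel

variable {z : ℂ}

lemma poissonKernelUHP_nonneg (hz : 0 ≤ z.im) (x : ℝ) : 0 ≤ poissonKernelUHP z x := by
  unfold poissonKernelUHP; positivity

lemma poissonKernelUHP_eq_pi_mul_cauchyPDFReal (hz : 0 ≤ z.im) (x : ℝ) :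
    poissonKernelUHP z x = π * cauchyPDFReal z.re z.im.toNNReal x := by
  rw [poissonKernelUHP, cauchyPDFReal_def, Real.coe_toNNReal _ hz, ← sq_abs (z.re - x),
    abs_sub_comm, sq_abs]
  field_simp

lemma integrable_poissonKernelUHP (hz : 0 ≤ z.im) : Integrable (poissonKernelUHP z) := by
  simp_rw [funext (poissonKernelUHP_eq_pi_mul_cauchyPDFReal hz)]
  exact integrable_cauchyPDFReal _ |>.const_mul π

lemma integral_poissonKernelUHP (hz : 0 < z.im) : ∫ x, poissonKernelUHP z x = π := by
  simp_rw [poissonKernelUHP_eq_pi_mul_cauchyPDFReal hz.le, integral_const_mul,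
    integral_cauchyPDFReal_eq_one _ (Real.toNNReal_pos.2 hz).ne', mul_one]

lemma lintegral_ofReal_poissonKernelUHP (hz : 0 < z.im) :
    ∫⁻ x, ENNReal.ofReal (poissonKernelUHP z x) = ENNReal.ofReal π := by
  rw [← ofReal_integral_eq_lintegral_ofReal (integrable_poissonKernelUHP hz.le)
    (ae_of_all _ (poissonKernelUHP_nonneg hz.le)), integral_poissonKernelUHP hz]

lemma continuous_poissonKernelUHP (hz : 0 < z.im) : Continuous (poissonKernelUHP z) := by
  unfold poissonKernelUHP
  exact continuous_const.div (by fun_prop) fun x => by positivity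

lemma poissonKernelUHP_le_inv_im (hz : 0 < z.im) (x : ℝ) : poissonKernelUHP z x ≤ z.im⁻¹ := by
  rw [poissonKernelUHP, div_le_iff₀ (by positivity)]
  field_simp
  nlinarith [sq_nonneg (z.re - x)]

lemma integrable_poissonKernelUHP_mul (hz : 0 < z.im) {f : ℝ → ℝ} (hf : Integrable f) :
    Integrable fun x => poissonKernelUHP z x * f x :=
  hf.bdd_mul (continuous_poissonKernelUHP hz).aestronglyMeasurable
    (ae_of_all _ fun x => by
      rw [Real.norm_of_nonneg (poissonKernelUHP_nonneg hz.le x)]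
      exact poissonKernelUHP_le_inv_im hz x)

lemma mul_two_mul_div_sq_le_poissonKernelUHP {t : ℝ} (ht : 0 < t) (r : ℝ) :
    r * (2 * t * r / (r ^ 2 + t ^ 2) ^ 2) ≤ 2 * poissonKernelUHP ⟨0, t⟩ r := by
  simp only [poissonKernelUHP, zero_sub, neg_sq]
  rw [mul_div_assoc', div_le_iff₀ (by positivity)]
  field_simp
  nlinarith [sq_nonneg r, sq_nonneg t, mul_pos ht ht]

lemma poissonKernelUHP_le_mul_poissonKernelUHP_of_le {t δ r : ℝ} (ht : 0 < t) (hδ : 0 < δ)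
    (hr : δ ≤ r) :
    poissonKernelUHP ⟨0, t⟩ r ≤ 2 * t / δ * poissonKernelUHP ⟨0, δ⟩ r := by
  simp only [poissonKernelUHP, zero_sub, neg_sq]
  rw [div_mul_div_comm, div_le_div_iff₀ (by positivity) (by positivity)]
  nlinarith [mul_le_mul hr hr hδ.le (hδ.le.trans hr), mul_pos ht hδ, sq_nonneg t]

lemma ofReal_poissonKernelUHP_eq_lintegral (x₀ : ℝ) {t : ℝ} (ht : 0 < t) (x : ℝ) :
    ENNReal.ofReal (poissonKernelUHP ⟨x₀, t⟩ x) =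
      ∫⁻ r in Ioi (dist x x₀), ENNReal.ofReal (2 * t * r / (r ^ 2 + t ^ 2) ^ 2) := by
  have hderiv : ∀ r ∈ Ici (dist x x₀),
      HasDerivAt (fun r : ℝ => -t * (r ^ 2 + t ^ 2)⁻¹) (2 * t * r / (r ^ 2 + t ^ 2) ^ 2) r := by
    intro r _
    have hden : HasDerivAt (fun r : ℝ => r ^ 2 + t ^ 2) (2 * r) r := by
      simpa using (hasDerivAt_pow 2 r).add_const (t ^ 2)
    exact ((hden.inv (by positivity)).const_mul (-t)).congr_deriv (by ring)
  have hnonneg : ∀ r ∈ Ioi (dist x x₀), 0 ≤ 2 * t * r / (r ^ 2 + t ^ 2) ^ 2 := fun r hr => by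
    have : 0 ≤ r := dist_nonneg.trans (le_of_lt hr)
    positivity
  have hlim : Tendsto (fun r : ℝ => -t * (r ^ 2 + t ^ 2)⁻¹) atTop (𝓝 0) := by
    simpa using (tendsto_inv_atTop_zero.comp (tendsto_atTop_add_const_right _ (t ^ 2)
      (tendsto_pow_atTop (α := ℝ) two_ne_zero))).const_mul (-t)
  rw [← ofReal_integral_eq_lintegral_ofReal (integrableOn_Ioi_deriv_of_nonneg' hderiv hnonneg hlim)
    ((ae_restrict_iff' measurableSet_Ioi).2 (ae_of_all _ hnonneg)),
    integral_Ioi_of_hasDerivAt_of_nonneg' hderiv hnonneg hlim, Real.dist_eq, sq_abs,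
    poissonKernelUHP]
  congr 1
  ring

end Kernel

theorem lintegral_radial_mul_eq_lintegral_ball {α : Type*} [PseudoMetricSpace α]
    [MeasurableSpace α] [OpensMeasurableSpace α] {μ : Measure α} [SFinite μ] (x₀ : α)
    {ψ : α → ℝ≥0∞} (hψ : AEMeasurable ψ μ) {m : ℝ → ℝ≥0∞} (hm : Measurable m) :
    ∫⁻ x, (∫⁻ r in Ioi (dist x x₀), m r) * ψ x ∂μ = ∫⁻ r, m r * ∫⁻ x in ball x₀ r, ψ x ∂μ := by
  have hS : MeasurableSet {p : α × ℝ | dist p.1 x₀ < p.2} :=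
    measurableSet_lt ((continuous_id.dist continuous_const).measurable.comp measurable_fst)
      measurable_snd
  calc ∫⁻ x, (∫⁻ r in Ioi (dist x x₀), m r) * ψ x ∂μ
      = ∫⁻ x, (∫⁻ r, {p : α × ℝ | dist p.1 x₀ < p.2}.indicator (fun p => m p.2 * ψ p.1) (x, r))
          ∂μ := by
        refine lintegral_congr fun x => ?_
        rw [← lintegral_mul_const'' _ hm.aemeasurable.restrict,
          ← lintegral_indicator measurableSet_Ioi]
        rfl
    _ = ∫⁻ r, ∫⁻ x, {p : α × ℝ | dist p.1 x₀ < p.2}.indicator (fun p => m p.2 * ψ p.1) (x, r)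
          ∂μ :=
        lintegral_lintegral_swap
          (((hm.comp measurable_snd).aemeasurable.mul hψ.comp_fst).indicator hS)
    _ = ∫⁻ r, m r * ∫⁻ x in ball x₀ r, ψ x ∂μ := by
        refine lintegral_congr fun r => ?_
        rw [← lintegral_const_mul'' _ hψ.restrict, ← lintegral_indicator measurableSet_ball]
        rfl

lemma ae_eventually_lintegral_ball_enorm_sub_le {E : Type*} [NormedAddCommGroup E] {f : ℝ → E}
    (hf : LocallyIntegrable f) :
    ∀ᵐ x₀, ∀ ε > 0, ∀ᶠ r in 𝓝[>] 0,
      ∫⁻ x in ball x₀ r, ‖f x - f x₀‖ₑ ≤ ENNReal.ofReal (ε * r) := by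
  filter_upwards [(Besicovitch.vitaliFamily volume).ae_tendsto_lintegral_enorm_sub_div hf]
    with x₀ hx₀ ε hε
  have hlim := hx₀.comp (Besicovitch.tendsto_filterAt volume x₀)
  filter_upwards [hlim.eventually (gt_mem_nhds (ENNReal.ofReal_pos.2 (half_pos hε))),
    self_mem_nhdsWithin] with r hr (hr0 : 0 < r)
  simp only [Function.comp, Real.volume_closedBall] at hr
  calc ∫⁻ x in ball x₀ r, ‖f x - f x₀‖ₑ ≤ ∫⁻ x in closedBall x₀ r, ‖f x - f x₀‖ₑ :=
        lintegral_mono_set ball_subset_closedBall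
    _ ≤ ENNReal.ofReal (ε / 2) * ENNReal.ofReal (2 * r) :=
        (ENNReal.div_le_iff (by simpa using hr0) ENNReal.ofReal_ne_top).1 hr.le
    _ = ENNReal.ofReal (ε * r) := by
        rw [← ENNReal.ofReal_mul (by positivity)]
        ring_nf

lemma lintegral_ball_enorm_sub_le {E : Type*} [NormedAddCommGroup E] {f : ℝ → E}
    (hf : Integrable f) (x₀ : ℝ) {r : ℝ} (hr : 0 ≤ r) :
    ∫⁻ x in ball x₀ r, ‖f x - f x₀‖ₑ ≤ ENNReal.ofReal ((∫ x, ‖f x‖) + 2 * ‖f x₀‖ * r) := by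
  calc ∫⁻ x in ball x₀ r, ‖f x - f x₀‖ₑ ≤ ∫⁻ x in ball x₀ r, (‖f x‖ₑ + ‖f x₀‖ₑ) :=
        lintegral_mono fun x => enorm_sub_le
    _ ≤ (∫⁻ x, ‖f x‖ₑ) + ‖f x₀‖ₑ * ENNReal.ofReal (2 * r) := by
        rw [lintegral_add_right _ measurable_const, setLIntegral_const, Real.volume_ball]
        exact add_le_add_left (setLIntegral_le_lintegral _ _) _
    _ = ENNReal.ofReal ((∫ x, ‖f x‖) + 2 * ‖f x₀‖ * r) := by
        rw [← ofReal_integral_norm_eq_lintegral_enorm hf, ← ofReal_norm,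
          ← ENNReal.ofReal_mul (norm_nonneg _),
          ← ENNReal.ofReal_add (integral_nonneg fun _ => norm_nonneg _) (by positivity)]
        ring_nf

lemma ofReal_two_mul_div_sq_mul_le {t δ ε M r : ℝ} (ht : 0 < t) (hδ : 0 < δ) (hε : 0 ≤ ε)
    (hM : 0 ≤ M) {Φ : ℝ≥0∞} (hnear : 0 < r → r ≤ δ → Φ ≤ ENNReal.ofReal (ε * r))
    (hfar : δ < r → Φ ≤ ENNReal.ofReal (M * r)) :
    ENNReal.ofReal (2 * t * r / (r ^ 2 + t ^ 2) ^ 2) * Φ ≤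
      ENNReal.ofReal (2 * ε) * ENNReal.ofReal (poissonKernelUHP ⟨0, t⟩ r) +
        ENNReal.ofReal (4 * M * t / δ) * ENNReal.ofReal (poissonKernelUHP ⟨0, δ⟩ r) := by
  have hPt := poissonKernelUHP_nonneg (z := ⟨0, t⟩) ht.le r
  have hPδ := poissonKernelUHP_nonneg (z := ⟨0, δ⟩) hδ.le r
  have hm := mul_two_mul_div_sq_le_poissonKernelUHP ht r
  rcases le_or_gt r 0 with hr | hr
  · rw [ENNReal.ofReal_of_nonpos (div_nonpos_of_nonpos_of_nonneg (by nlinarith) (by positivity)),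
      zero_mul]
    exact zero_le
  rw [← ENNReal.ofReal_mul (by positivity), ← ENNReal.ofReal_mul (by positivity)]
  rcases le_or_gt r δ with hrδ | hrδ
  · calc _ ≤ ENNReal.ofReal (2 * t * r / (r ^ 2 + t ^ 2) ^ 2) * ENNReal.ofReal (ε * r) := by
          gcongr; exact hnear hr hrδ
      _ = ENNReal.ofReal (ε * (r * (2 * t * r / (r ^ 2 + t ^ 2) ^ 2))) := by
          rw [← ENNReal.ofReal_mul (by positivity)]; ring_nf
      _ ≤ ENNReal.ofReal (2 * ε * poissonKernelUHP ⟨0, t⟩ r) :=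
          ENNReal.ofReal_le_ofReal (by nlinarith)
      _ ≤ _ := le_self_add
  · have htail := poissonKernelUHP_le_mul_poissonKernelUHP_of_le ht hδ hrδ.le
    calc _ ≤ ENNReal.ofReal (2 * t * r / (r ^ 2 + t ^ 2) ^ 2) * ENNReal.ofReal (M * r) := by
          gcongr; exact hfar hrδ
      _ = ENNReal.ofReal (M * (r * (2 * t * r / (r ^ 2 + t ^ 2) ^ 2))) := by
          rw [← ENNReal.ofReal_mul (by positivity)]; ring_nf
      _ ≤ ENNReal.ofReal (4 * M * t / δ * poissonKernelUHP ⟨0, δ⟩ r) := by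
          refine ENNReal.ofReal_le_ofReal ?_
          calc _ ≤ M * (2 * (2 * t / δ * poissonKernelUHP ⟨0, δ⟩ r)) :=
                mul_le_mul_of_nonneg_left (by linarith) hM
            _ = _ := by ring
      _ ≤ _ := le_add_self

lemma lintegral_poissonKernelUHP_mul_le (x₀ : ℝ) {ψ : ℝ → ℝ≥0∞} (hψ : AEMeasurable ψ)
    {t δ ε M : ℝ} (ht : 0 < t) (hδ : 0 < δ) (hε : 0 ≤ ε) (hM : 0 ≤ M)
    (hnear : ∀ r, 0 < r → r ≤ δ → ∫⁻ x in ball x₀ r, ψ x ≤ ENNReal.ofReal (ε * r))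
    (hfar : ∀ r, δ < r → ∫⁻ x in ball x₀ r, ψ x ≤ ENNReal.ofReal (M * r)) :
    ∫⁻ x, ENNReal.ofReal (poissonKernelUHP ⟨x₀, t⟩ x) * ψ x ≤
      ENNReal.ofReal (2 * π * ε + 4 * π * M * t / δ) := by
  calc ∫⁻ x, ENNReal.ofReal (poissonKernelUHP ⟨x₀, t⟩ x) * ψ x
      = ∫⁻ r, ENNReal.ofReal (2 * t * r / (r ^ 2 + t ^ 2) ^ 2) * ∫⁻ x in ball x₀ r, ψ x := by
        simp_rw [ofReal_poissonKernelUHP_eq_lintegral x₀ ht]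
        exact lintegral_radial_mul_eq_lintegral_ball x₀ hψ (by fun_prop)
    _ ≤ ∫⁻ r, (ENNReal.ofReal (2 * ε) * ENNReal.ofReal (poissonKernelUHP ⟨0, t⟩ r) +
          ENNReal.ofReal (4 * M * t / δ) * ENNReal.ofReal (poissonKernelUHP ⟨0, δ⟩ r)) :=
        lintegral_mono fun r =>
          ofReal_two_mul_div_sq_mul_le ht hδ hε hM (hnear r) (hfar r)
    _ = ENNReal.ofReal (2 * ε) * ENNReal.ofReal π +
          ENNReal.ofReal (4 * M * t / δ) * ENNReal.ofReal π := by
        rw [lintegral_add_left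
            ((continuous_poissonKernelUHP (z := ⟨0, t⟩) ht).measurable.ennreal_ofReal.const_mul _),
          lintegral_const_mul' _ _ ENNReal.ofReal_ne_top,
          lintegral_const_mul' _ _ ENNReal.ofReal_ne_top, lintegral_ofReal_poissonKernelUHP ht,
          lintegral_ofReal_poissonKernelUHP hδ]
    _ = ENNReal.ofReal (2 * π * ε + 4 * π * M * t / δ) := by
        rw [← ENNReal.ofReal_mul (by positivity), ← ENNReal.ofReal_mul (by positivity),
          ← ENNReal.ofReal_add (by positivity) (by positivity)]
        ring_nf

theorem tendsto_lintegral_poissonKernelUHP_mul (x₀ : ℝ) {ψ : ℝ → ℝ≥0∞} (hψ : AEMeasurable ψ)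
    {A B : ℝ} (hgrowth : ∀ r > 0, ∫⁻ x in ball x₀ r, ψ x ≤ ENNReal.ofReal (A + B * r))
    (hleb : ∀ ε > 0, ∀ᶠ r in 𝓝[>] 0, ∫⁻ x in ball x₀ r, ψ x ≤ ENNReal.ofReal (ε * r)) :
    Tendsto (fun t => ∫⁻ x, ENNReal.ofReal (poissonKernelUHP ⟨x₀, t⟩ x) * ψ x) (𝓝[>] 0)
      (𝓝 0) := by
  refine ENNReal.tendsto_nhds_zero.2 fun η hη => ?_
  obtain ⟨η', -, hη'0, hη'η⟩ := ENNReal.lt_iff_exists_real_btwn.1 hη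
  rw [ENNReal.ofReal_pos] at hη'0
  set ε := η' / (4 * π)
  obtain ⟨δ, hδ : 0 < δ, hnear⟩ := mem_nhdsGT_iff_exists_Ioc_subset.1 (hleb ε (by positivity))
  set M := |A| / δ + |B|
  have hfar (r : ℝ) (hr : δ < r) : ∫⁻ x in ball x₀ r, ψ x ≤ ENNReal.ofReal (M * r) := by
    refine (hgrowth r (hδ.trans hr)).trans (ENNReal.ofReal_le_ofReal ?_)
    have hA : |A| ≤ |A| / δ * r := by
      rw [div_mul_eq_mul_div, le_div_iff₀ hδ]
      exact mul_le_mul_of_nonneg_left hr.le (abs_nonneg A)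
    have hB : B * r ≤ |B| * r := mul_le_mul_of_nonneg_right (le_abs_self B) (by linarith)
    linarith [le_abs_self A]
  have hsmall : ∀ᶠ t in 𝓝[>] 0, 2 * π * ε + 4 * π * M * t / δ < η' := by
    have hlim : Tendsto (fun t => 2 * π * ε + 4 * π * M * t / δ) (𝓝[>] 0) (𝓝 (η' / 2)) := by
      refine tendsto_nhdsWithin_of_tendsto_nhds (Continuous.tendsto' (by fun_prop) _ _ ?_)
      simp only [ε]
      field_simp
      ring
    exact hlim.eventually (gt_mem_nhds (by linarith))
  filter_upwards [self_mem_nhdsWithin, hsmall] with t ht htη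
  calc _ ≤ ENNReal.ofReal (2 * π * ε + 4 * π * M * t / δ) :=
        lintegral_poissonKernelUHP_mul_le x₀ hψ ht hδ (by positivity) (by positivity)
          (fun r hr hrδ => hnear ⟨hr, hrδ⟩) hfar
    _ ≤ ENNReal.ofReal η' := ENNReal.ofReal_le_ofReal htη.le
    _ ≤ η := hη'η.le

lemma poissonKernelUHP_le_of_mem_cone {x₀ c : ℝ} {z : ℂ} (hz : z ∈ cone x₀ c) (x : ℝ) :
    poissonKernelUHP z x ≤ (2 + 2 * c ^ 2) * poissonKernelUHP ⟨x₀, z.im⟩ x := by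
  obtain ⟨him, hre⟩ := hz
  have hre_sq : (z.re - x₀) ^ 2 ≤ c ^ 2 * z.im ^ 2 := by
    rw [← sq_abs, ← mul_pow]
    exact pow_le_pow_left₀ (abs_nonneg _) hre 2
  have hden : (x₀ - x) ^ 2 + z.im ^ 2 ≤ (2 + 2 * c ^ 2) * ((z.re - x) ^ 2 + z.im ^ 2) := by
    nlinarith [sq_nonneg (x₀ + x - 2 * z.re), sq_nonneg c, sq_nonneg z.im,
      mul_nonneg (sq_nonneg c) (sq_nonneg (z.re - x))]
  simp only [poissonKernelUHP]
  rw [mul_div_assoc', div_le_div_iff₀ (by positivity) (by positivity)]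
  nlinarith [mul_le_mul_of_nonneg_left hden him.le]

lemma lintegral_poissonKernelUHP_mul_le_of_mem_cone {x₀ c : ℝ} {z : ℂ} (hz : z ∈ cone x₀ c)
    (ψ : ℝ → ℝ≥0∞) :
    ∫⁻ x, ENNReal.ofReal (poissonKernelUHP z x) * ψ x ≤
      ENNReal.ofReal (2 + 2 * c ^ 2) *
        ∫⁻ x, ENNReal.ofReal (poissonKernelUHP ⟨x₀, z.im⟩ x) * ψ x := by
  rw [← lintegral_const_mul' _ _ ENNReal.ofReal_ne_top]
  refine lintegral_mono fun x => ?_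
  rw [← mul_assoc, ← ENNReal.ofReal_mul (by positivity)]
  gcongr
  exact poissonKernelUHP_le_of_mem_cone hz x

lemma tendsto_im_nhdsWithin_cone (x₀ c : ℝ) :
    Tendsto Complex.im (𝓝[cone x₀ c] (x₀ : ℂ)) (𝓝[>] 0) :=
  tendsto_nhdsWithin_of_tendsto_nhds_of_eventually_within _
    (by simpa using (Complex.continuous_im.tendsto (x₀ : ℂ)).mono_left nhdsWithin_le_nhds)
    (eventually_nhdsWithin_of_forall fun _ hz => hz.1)

lemma edist_poissonIntegral_le {f : ℝ → ℝ} (hf : Integrable f) {z : ℂ} (hz : 0 < z.im)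
    (x₀ : ℝ) :
    edist ((1 / π) * ∫ x, poissonKernelUHP z x * f x) (f x₀) ≤
      ENNReal.ofReal (1 / π) * ∫⁻ x, ENNReal.ofReal (poissonKernelUHP z x) * ‖f x - f x₀‖ₑ := by
  have hsub : (1 / π) * (∫ x, poissonKernelUHP z x * f x) - f x₀ =
      (1 / π) * ∫ x, poissonKernelUHP z x * (f x - f x₀) := by
    simp_rw [mul_sub]
    rw [integral_sub (integrable_poissonKernelUHP_mul hz hf)
      ((integrable_poissonKernelUHP hz.le).mul_const _), integral_mul_const,
      integral_poissonKernelUHP hz]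
    field_simp
  rw [edist_eq_enorm_sub, hsub, enorm_mul, Real.enorm_of_nonneg (by positivity)]
  gcongr
  calc ‖∫ x, poissonKernelUHP z x * (f x - f x₀)‖ₑ
      ≤ ∫⁻ x, ‖poissonKernelUHP z x * (f x - f x₀)‖ₑ := enorm_integral_le_lintegral_enorm _
    _ = _ := by simp_rw [enorm_mul, Real.enorm_of_nonneg (poissonKernelUHP_nonneg hz.le _)]

theorem fatou_integrable_density_general
    (f : ℝ → ℝ) (hf_int : Integrable f) :
    ∀ᵐ x₀ : ℝ, ∀ c > (0 : ℝ),
      Tendsto (fun z : ℂ => (1 / π) * ∫ x, poissonKernelUHP z x * f x)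
        (𝓝[cone x₀ c] (x₀ : ℂ)) (𝓝 (f x₀)) := by
  filter_upwards [ae_eventually_lintegral_ball_enorm_sub_le hf_int.locallyIntegrable]
    with x₀ hx₀ c _
  have hvert := tendsto_lintegral_poissonKernelUHP_mul x₀
    (hf_int.aemeasurable.sub_const (f x₀)).enorm
    (fun r hr => lintegral_ball_enorm_sub_le hf_int x₀ hr.le) hx₀
  have hbound := ENNReal.Tendsto.const_mul (hvert.comp (tendsto_im_nhdsWithin_cone x₀ c))
    (Or.inr (ENNReal.mul_ne_top ENNReal.ofReal_ne_top ENNReal.ofReal_ne_top))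
    (a := ENNReal.ofReal (1 / π) * ENNReal.ofReal (2 + 2 * c ^ 2))
  rw [mul_zero] at hbound
  rw [tendsto_iff_edist_tendsto_0]
  refine tendsto_of_tendsto_of_tendsto_of_le_of_le' tendsto_const_nhds hbound
    (Eventually.of_forall fun _ => zero_le) ?_
  filter_upwards [self_mem_nhdsWithin] with z hz
  calc _ ≤ ENNReal.ofReal (1 / π) *
        ∫⁻ x, ENNReal.ofReal (poissonKernelUHP z x) * ‖f x - f x₀‖ₑ :=
        edist_poissonIntegral_le hf_int hz.1 x₀
    _ ≤ ENNReal.ofReal (1 / π) * (ENNReal.ofReal (2 + 2 * c ^ 2) *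
        ∫⁻ x, ENNReal.ofReal (poissonKernelUHP ⟨x₀, z.im⟩ x) * ‖f x - f x₀‖ₑ) := by
        gcongr; exact lintegral_poissonKernelUHP_mul_le_of_mem_cone hz _
    _ = _ := (mul_assoc _ _ _).symm

theorem fatou_integrable_density
    (f : ℝ → ℝ) (hf_nonneg : 0 ≤ f) (hf_int : Integrable f) :
    ∀ᵐ x₀ : ℝ, ∀ c > (0 : ℝ),
      Tendsto (fun z : ℂ => (1 / π) * ∫ x, poissonKernelUHP z x * f x)
        (𝓝[cone x₀ c] (x₀ : ℂ)) (𝓝 (f x₀)) :=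
  fatou_integrable_density_general f hf_int
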